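/- Assume λ̃_r > λ̃_{r+1} and λ̃_r > 0. Let Ψ ∈ ℝ^{r×r} be orthogonal and let X = O^B (Λ^B)^{-1/2} O^Ã_{:,{1,…,r}} Ψ. Then the Hessian of ℓ at X is positive semidefinite: q_X(V) ≥ 0 for every V ∈ ℝ^{d×r}. -/

import Mathlib

/-!
Whitening with `P = O^B (Λ^B)^{-1/2} O^Ã` gives `Pᵀ A P = Λ̃` and `Pᵀ B P = 1`, and `ℓ(P Y)` is the
loss of the congruent pair `(Pᵀ A P, Pᵀ B P)` at `Y`; `ℓ` is also invariant under `Y ↦ Y Ψ` for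
orthogonal `Ψ`. So the Hessian form at `X` is the one at the first `r` unit vectors for the pair
`(Λ̃, 1)`. There, writing `W₁` for the top `r × r` block of `W` and `S = W₁ + W₁ᵀ`,
`q(W) / 2 = ∑_{j ≤ r < i} (λ̃_j - λ̃_i) W_ij² + tr (S Λ̃_r S)`, and both terms are nonnegative
because `λ̃_1, …, λ̃_r` are nonnegative and dominate the remaining eigenvalues.
-/

open Matrix

/-- `ℓ(X) = L(X, XᵀAX) = -2 tr(XᵀAX) + tr((XᵀAX)(XᵀBX))`. -/
noncomputable def gevEll (d r : ℕ) (A B : Matrix (Fin d) (Fin d) ℝ)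
    (X : Matrix (Fin d) (Fin r) ℝ) : ℝ :=
  -2 * (Xᵀ * A * X).trace + ((Xᵀ * A * X) * (Xᵀ * B * X)).trace

/-- `q_X(V)`: the quadratic form of the Hessian `H_X` of `ℓ` at `X`, i.e. the second
derivative at `t = 0` of `t ↦ ℓ(X + tV)`. -/
noncomputable def gevHessQuad (d r : ℕ) (A B : Matrix (Fin d) (Fin d) ℝ)
    (X V : Matrix (Fin d) (Fin r) ℝ) : ℝ :=
  iteratedDeriv 2 (fun t : ℝ => gevEll d r A B (X + t • V)) 0

namespace Matrix

section CommRing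

variable {R : Type*} [CommRing R] {m n : Type*} [Fintype m] [Fintype n]

omit [Fintype m] in
theorem transpose_add_smul_mul_mul_add_smul (M : Matrix n n R) (X V : Matrix n m R) (t : R) :
    (X + t • V)ᵀ * M * (X + t • V)
      = Xᵀ * M * X + t • (Xᵀ * M * V + Vᵀ * M * X) + t ^ 2 • (Vᵀ * M * V) := by
  simp only [transpose_add, transpose_smul, Matrix.add_mul, Matrix.mul_add, Matrix.smul_mul,
    Matrix.mul_smul]
  module

theorem trace_symmetrization (D W : Matrix m m R) :
    (D * (Wᵀ * W)).trace - (Wᵀ * D * W).trace + ((D * W + Wᵀ * D) * (W + Wᵀ)).trace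
      = ((W + Wᵀ)ᵀ * D * (W + Wᵀ)).trace := by
  simp only [transpose_add, transpose_transpose, Matrix.add_mul, Matrix.mul_add, trace_add]
  rw [trace_mul_comm D, trace_mul_cycle W D W, trace_mul_cycle W D Wᵀ, trace_mul_cycle Wᵀ D W,
    trace_mul_cycle W W D, trace_mul_cycle W Wᵀ D]
  ring

variable [DecidableEq m] [DecidableEq n]

theorem trace_diagonal_mul_gram_sub (p : m → R) (lam : n → R) (W : Matrix n m R) :
    (diagonal p * (Wᵀ * W)).trace - (Wᵀ * diagonal lam * W).trace
      = ∑ j, ∑ i, (p j - lam i) * W i j ^ 2 := by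
  simp only [trace, diag, diagonal_mul, mul_apply (N := W), mul_diagonal, transpose_apply,
    Finset.mul_sum, ← Finset.sum_sub_distrib]
  exact Finset.sum_congr rfl fun j _ => Finset.sum_congr rfl fun i _ => by ring

theorem transpose_mul_mul_eq_of_mul_mul_eq {Q D O A Λ : Matrix n n R} (hO : Oᵀ * O = 1)
    (hD : Dᵀ = D) (h : D * Qᵀ * A * Q * D = O * Λ * Oᵀ) :
    (Q * D * O)ᵀ * A * (Q * D * O) = Λ := by
  calc (Q * D * O)ᵀ * A * (Q * D * O) = Oᵀ * (D * Qᵀ * A * Q * D) * O := by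
        simp only [transpose_mul, hD, Matrix.mul_assoc]
    _ = Λ := by
        rw [h, ← Matrix.mul_assoc, ← Matrix.mul_assoc, hO, Matrix.one_mul, Matrix.mul_assoc, hO,
          Matrix.mul_one]

theorem transpose_mul_mul_eq_one_of_mul_mul_eq_one {Q D O M : Matrix n n R} (hQ : Qᵀ * Q = 1)
    (hO : Oᵀ * O = 1) (hD : Dᵀ = D) (hM : D * M * D = 1) :
    (Q * D * O)ᵀ * (Q * M * Qᵀ) * (Q * D * O) = 1 := by
  calc (Q * D * O)ᵀ * (Q * M * Qᵀ) * (Q * D * O)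
        = Oᵀ * (D * (Qᵀ * Q) * M * (Qᵀ * Q) * D) * O := by
        simp only [transpose_mul, hD, Matrix.mul_assoc]
    _ = 1 := by rw [hQ, Matrix.mul_one, Matrix.mul_one, hM, Matrix.mul_one, hO]

end CommRing

variable {m n : Type*} [Fintype m] [Fintype n] [DecidableEq m] [DecidableEq n]

theorem trace_transpose_mul_diagonal_mul_nonneg {p : m → ℝ} (hp : ∀ j, 0 ≤ p j)
    (S : Matrix m m ℝ) : 0 ≤ (Sᵀ * diagonal p * S).trace := by
  simpa [conjTranspose_eq_transpose_of_trivial] using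
    ((posSemidef_diagonal_iff.mpr hp).conjTranspose_mul_mul_same S).trace_nonneg

theorem diagonal_inv_sqrt_mul_diagonal_mul_diagonal_inv_sqrt {μ : n → ℝ} (hμ : ∀ k, 0 < μ k) :
    diagonal (fun k => (√(μ k))⁻¹) * diagonal μ * diagonal (fun k => (√(μ k))⁻¹) = 1 := by
  rw [diagonal_mul_diagonal, diagonal_mul_diagonal, ← diagonal_one]
  congr 1
  funext k
  have hsq := Real.sq_sqrt (hμ k).le
  have hsqrt_pos := Real.sqrt_pos.mpr (hμ k)
  field_simp
  linarith

theorem trace_diagonal_mul_gram_sub_submatrix_le {e : m → n}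
    (he : Function.Injective e) {p : m → ℝ} {lam : n → ℝ}
    (hdom : ∀ j, ∀ i ∉ Set.range e, lam i ≤ p j) (W : Matrix n m ℝ) :
    (diagonal p * ((W.submatrix e id)ᵀ * W.submatrix e id)).trace
        - ((W.submatrix e id)ᵀ * diagonal (lam ∘ e) * W.submatrix e id).trace
      ≤ (diagonal p * (Wᵀ * W)).trace - (Wᵀ * diagonal lam * W).trace := by
  rw [trace_diagonal_mul_gram_sub, trace_diagonal_mul_gram_sub]
  refine Finset.sum_le_sum fun j _ => ?_
  simp only [Function.comp_apply, submatrix_apply, id]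
  rw [← Finset.sum_image (f := fun i => (p j - lam i) * W i j ^ 2) he.injOn]
  refine Finset.sum_le_sum_of_subset_of_nonneg (Finset.subset_univ _) fun i _ hi => ?_
  have hi' : i ∉ Set.range e := fun ⟨k, hk⟩ => hi (Finset.mem_image.mpr ⟨k, by simp, hk⟩)
  exact mul_nonneg (sub_nonneg.mpr (hdom j i hi')) (sq_nonneg _)

end Matrix

theorem iteratedDeriv_two_quartic (c₀ c₁ c₂ c₃ c₄ : ℝ) :
    iteratedDeriv 2 (fun t : ℝ => c₀ + c₁ * t + c₂ * t ^ 2 + c₃ * t ^ 3 + c₄ * t ^ 4) 0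
      = 2 * c₂ := by
  simp (disch := fun_prop) [iteratedDeriv_fun_add, iteratedDeriv_const,
    iteratedDeriv_const_mul_field c₁ (fun t : ℝ => t), iteratedDeriv_fun_id_zero, mul_comm]

theorem iteratedDeriv_two_trace_quadratic {m : Type*} [Fintype m]
    (S₀ S₁ S₂ T₀ T₁ T₂ : Matrix m m ℝ) :
    iteratedDeriv 2 (fun t : ℝ => -2 * (S₀ + t • S₁ + t ^ 2 • S₂).trace
        + ((S₀ + t • S₁ + t ^ 2 • S₂) * (T₀ + t • T₁ + t ^ 2 • T₂)).trace) 0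
      = 2 * (-2 * S₂.trace + (S₀ * T₂).trace + (S₁ * T₁).trace + (S₂ * T₀).trace) := by
  have hquartic : (fun t : ℝ => -2 * (S₀ + t • S₁ + t ^ 2 • S₂).trace
      + ((S₀ + t • S₁ + t ^ 2 • S₂) * (T₀ + t • T₁ + t ^ 2 • T₂)).trace)
      = fun t => (-2 * S₀.trace + (S₀ * T₀).trace)
        + (-2 * S₁.trace + (S₀ * T₁).trace + (S₁ * T₀).trace) * t
        + (-2 * S₂.trace + (S₀ * T₂).trace + (S₁ * T₁).trace + (S₂ * T₀).trace) * t ^ 2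
        + ((S₁ * T₂).trace + (S₂ * T₁).trace) * t ^ 3 + (S₂ * T₂).trace * t ^ 4 := by
    funext t
    simp only [Matrix.add_mul, Matrix.mul_add, Matrix.smul_mul, Matrix.mul_smul,
      trace_add, trace_smul, smul_eq_mul]
    ring
  rw [hquartic, iteratedDeriv_two_quartic]

theorem gevHessQuad_eq (d r : ℕ) (A B : Matrix (Fin d) (Fin d) ℝ)
    (X V : Matrix (Fin d) (Fin r) ℝ) :
    gevHessQuad d r A B X V
      = 2 * (-2 * (Vᵀ * A * V).trace + ((Xᵀ * A * X) * (Vᵀ * B * V)).trace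
          + ((Xᵀ * A * V + Vᵀ * A * X) * (Xᵀ * B * V + Vᵀ * B * X)).trace
          + ((Vᵀ * A * V) * (Xᵀ * B * X)).trace) := by
  simp only [gevHessQuad, gevEll, transpose_add_smul_mul_mul_add_smul]
  exact iteratedDeriv_two_trace_quadratic ..

theorem gevEll_mul_left {d d' r : ℕ} (A B : Matrix (Fin d') (Fin d') ℝ)
    (P : Matrix (Fin d') (Fin d) ℝ) (X : Matrix (Fin d) (Fin r) ℝ) :
    gevEll d' r A B (P * X) = gevEll d r (Pᵀ * A * P) (Pᵀ * B * P) X := by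
  simp only [gevEll, transpose_mul, Matrix.mul_assoc]

theorem gevHessQuad_mul_left {d d' r : ℕ} (A B : Matrix (Fin d') (Fin d') ℝ)
    (P : Matrix (Fin d') (Fin d) ℝ) (X V : Matrix (Fin d) (Fin r) ℝ) :
    gevHessQuad d' r A B (P * X) (P * V) = gevHessQuad d r (Pᵀ * A * P) (Pᵀ * B * P) X V := by
  simp only [gevHessQuad, ← Matrix.mul_smul, ← Matrix.mul_add, gevEll_mul_left]

theorem gevEll_mul_orthogonal {d r : ℕ} (A B : Matrix (Fin d) (Fin d) ℝ)
    (X : Matrix (Fin d) (Fin r) ℝ) {Ψ : Matrix (Fin r) (Fin r) ℝ} (hΨ : Ψ * Ψᵀ = 1) :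
    gevEll d r A B (X * Ψ) = gevEll d r A B X := by
  have hconj : ∀ M : Matrix (Fin d) (Fin d) ℝ, (X * Ψ)ᵀ * M * (X * Ψ) = Ψᵀ * (Xᵀ * M * X) * Ψ :=
    fun M => by simp only [transpose_mul, Matrix.mul_assoc]
  have htrace : ∀ N : Matrix (Fin r) (Fin r) ℝ, (Ψᵀ * N * Ψ).trace = N.trace := fun N => by
    rw [trace_mul_cycle, hΨ, Matrix.one_mul]
  have hprod : ∀ M N : Matrix (Fin r) (Fin r) ℝ,
      (Ψᵀ * M * Ψ) * (Ψᵀ * N * Ψ) = Ψᵀ * (M * N) * Ψ := fun M N => by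
    rw [Matrix.mul_assoc, Matrix.mul_assoc Ψᵀ N, ← Matrix.mul_assoc Ψ, hΨ, Matrix.one_mul]
    simp only [Matrix.mul_assoc]
  simp only [gevEll, hconj, hprod, htrace]

theorem gevHessQuad_mul_orthogonal {d r : ℕ} (A B : Matrix (Fin d) (Fin d) ℝ)
    (X V : Matrix (Fin d) (Fin r) ℝ) {Ψ : Matrix (Fin r) (Fin r) ℝ} (hΨ : Ψ * Ψᵀ = 1) :
    gevHessQuad d r A B (X * Ψ) (V * Ψ) = gevHessQuad d r A B X V := by
  simp only [gevHessQuad, ← Matrix.smul_mul, ← Matrix.add_mul, gevEll_mul_orthogonal _ _ _ hΨ]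

theorem gevHessQuad_diagonal_one_submatrix_nonneg {d r : ℕ} {e : Fin r → Fin d}
    (he : Function.Injective e) {lam : Fin d → ℝ}
    (hdom : ∀ j, ∀ i ∉ Set.range e, lam i ≤ lam (e j)) (hnonneg : ∀ j, 0 ≤ lam (e j))
    (W : Matrix (Fin d) (Fin r) ℝ) :
    0 ≤ gevHessQuad d r (diagonal lam) 1 ((1 : Matrix (Fin d) (Fin d) ℝ).submatrix id e) W := by
  set E := (1 : Matrix (Fin d) (Fin d) ℝ).submatrix id e
  set W₁ := W.submatrix e id
  set D := diagonal (lam ∘ e)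
  have hEl : ∀ {k : ℕ} (M : Matrix (Fin d) (Fin k) ℝ), Eᵀ * M = M.submatrix e id := fun M => by
    simpa [E] using one_submatrix_mul e (Equiv.refl _) M
  have hEr : ∀ {k : ℕ} (M : Matrix (Fin k) (Fin d) ℝ), M * E = M.submatrix id e := fun M => by
    simpa [E] using mul_submatrix_one (Equiv.refl _) e M
  have hEE : Eᵀ * E = 1 := by
    rw [hEl, submatrix_submatrix, Function.id_comp, Function.comp_id, submatrix_one _ he]
  have hEΛE : Eᵀ * diagonal lam * E = D := by
    rw [hEl, hEr, submatrix_submatrix, Function.id_comp, Function.comp_id,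
      submatrix_diagonal _ _ he]
  have hEΛW : Eᵀ * diagonal lam * W = D * W₁ := by
    rw [Matrix.mul_assoc, hEl]; ext; simp [D, W₁, diagonal_mul]
  have hWΛE : Wᵀ * diagonal lam * E = W₁ᵀ * D := by
    rw [hEr]; ext; simp [D, W₁, mul_diagonal]
  have hEW : Eᵀ * W = W₁ := hEl W
  have hWE : Wᵀ * E = W₁ᵀ := hEr Wᵀ
  rw [gevHessQuad_eq]
  simp only [Matrix.mul_one, hEE, hEΛE, hEΛW, hWΛE, hEW, hWE]
  have hdiff : (D * (W₁ᵀ * W₁)).trace - (W₁ᵀ * D * W₁).trace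
      ≤ (D * (Wᵀ * W)).trace - (Wᵀ * diagonal lam * W).trace :=
    trace_diagonal_mul_gram_sub_submatrix_le he hdom W
  have hpsd : 0 ≤ ((W₁ + W₁ᵀ)ᵀ * D * (W₁ + W₁ᵀ)).trace :=
    trace_transpose_mul_diagonal_mul_nonneg hnonneg _
  linarith [trace_symmetrization D W₁]

theorem gevHessQuad_mul_mul_of_transpose_mul_mul_eq_one {d r : ℕ}
    (A B P : Matrix (Fin d) (Fin d) ℝ)
    (hPB : Pᵀ * B * P = 1) {Ψ : Matrix (Fin r) (Fin r) ℝ} (hΨ : Ψᵀ * Ψ = 1)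
    (Y V : Matrix (Fin d) (Fin r) ℝ) :
    gevHessQuad d r A B (P * Y * Ψ) V = gevHessQuad d r (Pᵀ * A * P) 1 Y (Pᵀ * B * V * Ψᵀ) := by
  have hV : V = P * (Pᵀ * B * V * Ψᵀ) * Ψ := by
    calc V = P * (Pᵀ * B) * V * (Ψᵀ * Ψ) := by
          rw [mul_eq_one_comm.mp hPB, hΨ, Matrix.one_mul, Matrix.mul_one]
      _ = _ := by simp only [Matrix.mul_assoc]
  conv_lhs => rw [hV]
  rw [gevHessQuad_mul_orthogonal _ _ _ _ (mul_eq_one_comm.mp hΨ), gevHessQuad_mul_left, hPB]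

theorem Antitone.apply_le_apply_castLE_of_notMem_range {β : Type*} [Preorder β] {d r : ℕ}
    {f : Fin d → β} (hf : Antitone f) (h : r ≤ d) (j : Fin r) {i : Fin d}
    (hi : i ∉ Set.range (Fin.castLE h)) : f i ≤ f (Fin.castLE h j) := by
  have hri : r ≤ i := by
    by_contra! hir
    exact hi ⟨⟨i, hir⟩, rfl⟩
  exact hf (Fin.le_def.mpr (by simp; omega))

/-- Assume `λ̃_r > λ̃_{r+1}` and `λ̃_r > 0`.  For orthogonal `Ψ` and
`X = O^B (Λ^B)^{-1/2} O^Ã_{:,{1,…,r}} Ψ`, the Hessian of `ℓ` at `X` is positive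
semidefinite: `q_X(V) ≥ 0` for every `V`. -/
theorem gev_stable_equilibrium_hessian_psd
    (d r : ℕ) (hrlt : r < d)
    (A B : Matrix (Fin d) (Fin d) ℝ)
    (OB : Matrix (Fin d) (Fin d) ℝ) (hOB : OBᵀ * OB = 1)
    (μ : Fin d → ℝ) (hμ : ∀ k, 0 < μ k)
    (hBdec : B = OB * diagonal μ * OBᵀ)
    (OA : Matrix (Fin d) (Fin d) ℝ) (hOA : OAᵀ * OA = 1)
    (lam : Fin d → ℝ) (hlam : ∀ k l : Fin d, k ≤ l → lam l ≤ lam k)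
    (hpos : 0 < lam ⟨r - 1, by omega⟩)
    (hAdec : diagonal (fun k => (Real.sqrt (μ k))⁻¹) * OBᵀ * A * OB *
        diagonal (fun k => (Real.sqrt (μ k))⁻¹) = OA * diagonal lam * OAᵀ)
    (Ψ : Matrix (Fin r) (Fin r) ℝ) (hΨ : Ψᵀ * Ψ = 1)
    (X : Matrix (Fin d) (Fin r) ℝ)
    (hX : X = OB * diagonal (fun k => (Real.sqrt (μ k))⁻¹) *
        OA.submatrix id (Fin.castLE hrlt.le) * Ψ) :
    ∀ V : Matrix (Fin d) (Fin r) ℝ, 0 ≤ gevHessQuad d r A B X V := by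
  intro V
  set P := OB * diagonal (fun k => (√(μ k))⁻¹) * OA
  have hPA : Pᵀ * A * P = diagonal lam :=
    transpose_mul_mul_eq_of_mul_mul_eq hOA (diagonal_transpose _) hAdec
  have hPB : Pᵀ * B * P = 1 := by
    rw [hBdec]
    exact transpose_mul_mul_eq_one_of_mul_mul_eq_one hOB hOA (diagonal_transpose _)
      (diagonal_inv_sqrt_mul_diagonal_mul_diagonal_inv_sqrt hμ)
  have hXP : X = P * (1 : Matrix (Fin d) (Fin d) ℝ).submatrix id (Fin.castLE hrlt.le) * Ψ := by
    have hOAE : OA * (1 : Matrix (Fin d) (Fin d) ℝ).submatrix id (Fin.castLE hrlt.le)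
        = OA.submatrix id (Fin.castLE hrlt.le) := by
      simpa using mul_submatrix_one (Equiv.refl _) (Fin.castLE hrlt.le) OA
    rw [hX, ← hOAE]
    simp only [P, Matrix.mul_assoc]
  have hanti : Antitone lam := fun k l hkl => hlam k l hkl
  have hnonneg : ∀ j, 0 ≤ lam (Fin.castLE hrlt.le j) := fun j =>
    hpos.le.trans (hanti (Fin.le_def.mpr (by simp; omega)))
  rw [hXP, gevHessQuad_mul_mul_of_transpose_mul_mul_eq_one _ _ _ hPB hΨ, hPA]
  exact gevHessQuad_diagonal_one_submatrix_nonneg (Fin.castLE_injective hrlt.le)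
    (fun j _ hi => hanti.apply_le_apply_castLE_of_notMem_range hrlt.le j hi) hnonneg _
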